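/- Let T be any 2×2 complex matrix and let Tᵗ denote its transpose. Then the numerical range of T on ℓ_p² equals the numerical range of Tᵗ on ℓ_q²: V_p(T) = V_q(Tᵗ). -/

import Mathlib

/-!
The map `x ↦ (conj xₖ |xₖ|^(p-2))ₖ` sends the unit sphere of `ℓ_p²` onto that of `ℓ_q²`, and for
conjugate exponents the same recipe with `q` inverts it. Writing the numerical-range value as the
bilinear pairing `Tx ⬝ y` with `y` the image of `x`, and `Tx ⬝ y = Tᵀy ⬝ x`, the value of `T` at `x`
is the value of `Tᵀ` at `y`; symmetry in `p` and `q` gives the reverse inclusion.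
-/

open Complex Real

/-- The `ℓ_r` norm on `ℂ²`. -/
noncomputable def lpNorm (r : ℝ) (x : Fin 2 → ℂ) : ℝ :=
  (∑ k, ‖x k‖ ^ r) ^ (1 / r)

/-- The numerical range of a `2 × 2` complex matrix acting on `ℓ_r²`. -/
noncomputable def numRange (r : ℝ) (T : Matrix (Fin 2) (Fin 2) ℂ) : Set ℂ :=
  { z | ∃ x : Fin 2 → ℂ, lpNorm r x = 1 ∧
      z = ∑ k, T.mulVec x k * (starRingEnd ℂ) (x k) * ((‖x k‖ ^ (r - 2) : ℝ) : ℂ) }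

open Matrix ComplexConjugate

/-- The duality map of `ℓ_r`: `x ⬝ᵥ dualityMap r x = ‖x‖_r ^ r`. -/
noncomputable def dualityMap {ι : Type*} (r : ℝ) (x : ι → ℂ) : ι → ℂ :=
  fun k => conj (x k) * ((‖x k‖ ^ (r - 2) : ℝ) : ℂ)

section DualityMap

variable {ι : Type*} {p q r : ℝ}

lemma norm_dualityMap (hr : r ≠ 1) (x : ι → ℂ) (k : ι) :
    ‖dualityMap r x k‖ = ‖x k‖ ^ (r - 1) := by
  rcases eq_or_ne (x k) 0 with h | h
  · simp [dualityMap, h, Real.zero_rpow (sub_ne_zero.2 hr)]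
  · have hpos : 0 < ‖x k‖ := norm_pos_iff.2 h
    rw [dualityMap, norm_mul, Complex.norm_conj, Complex.norm_real, Real.norm_eq_abs,
      abs_of_nonneg (Real.rpow_nonneg hpos.le _), show r - 1 = 1 + (r - 2) by ring,
      Real.rpow_add hpos, Real.rpow_one]

lemma dualityMap_dualityMap (hpq : (p - 1) * (q - 1) = 1) (x : ι → ℂ) :
    dualityMap q (dualityMap p x) = x := by
  have hp : p ≠ 1 := by rintro rfl; simp at hpq
  funext k
  rcases eq_or_ne (x k) 0 with h | h
  · simp [dualityMap, h]
  · have hpos : 0 < ‖x k‖ := norm_pos_iff.2 h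
    have hexp : p - 2 + (p - 1) * (q - 2) = 0 := by linear_combination hpq
    rw [dualityMap, norm_dualityMap hp]
    rw [dualityMap, map_mul, Complex.conj_conj, Complex.conj_ofReal, mul_assoc, ← Complex.ofReal_mul, ← Real.rpow_mul hpos.le,
      ← Real.rpow_add hpos, hexp, Real.rpow_zero, Complex.ofReal_one, mul_one]

lemma lpNorm_dualityMap (hp : 0 < p) (hpq : (p - 1) * (q - 1) = 1) (x : Fin 2 → ℂ) :
    lpNorm q (dualityMap p x) = lpNorm p x ^ (p - 1) := by
  have hp1 : p ≠ 1 := by rintro rfl; simp at hpq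
  have hterm : ∀ k, ‖dualityMap p x k‖ ^ q = ‖x k‖ ^ p := fun k => by
    rw [norm_dualityMap hp1, ← Real.rpow_mul (norm_nonneg _)]
    congr 1; linear_combination hpq
  have hq : 1 / q = 1 / p * (p - 1) := by
    have hq0 : q ≠ 0 := by rintro rfl; linarith
    field_simp; linear_combination -hpq
  simp only [lpNorm, hterm]
  rw [← Real.rpow_mul (Finset.sum_nonneg fun k _ => Real.rpow_nonneg (norm_nonneg _) _), hq]

lemma mem_numRange_iff {T : Matrix (Fin 2) (Fin 2) ℂ} {z : ℂ} :
    z ∈ numRange r T ↔ ∃ x, lpNorm r x = 1 ∧ z = T *ᵥ x ⬝ᵥ dualityMap r x := by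
  simp only [numRange, dotProduct, dualityMap, mul_assoc, Set.mem_ofPred_eq]

lemma numRange_subset_numRange_transpose (hp : 0 < p) (hpq : (p - 1) * (q - 1) = 1)
    (T : Matrix (Fin 2) (Fin 2) ℂ) : numRange p T ⊆ numRange q Tᵀ := by
  intro z hz
  obtain ⟨x, hx, rfl⟩ := mem_numRange_iff.1 hz
  refine mem_numRange_iff.2 ⟨dualityMap p x, ?_, ?_⟩
  · rw [lpNorm_dualityMap hp hpq, hx, Real.one_rpow]
  · rw [dualityMap_dualityMap hpq, mulVec_transpose, ← dotProduct_mulVec, dotProduct_comm]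

end DualityMap

theorem numRange_transpose_conjugate_exponent (p q : ℝ) (hp : 1 < p) (hq : q = p / (p - 1))
    (T : Matrix (Fin 2) (Fin 2) ℂ) :
    numRange p T = numRange q T.transpose := by
  have hpq : (p - 1) * (q - 1) = 1 := by
    rw [hq]; field_simp [(sub_pos.2 hp).ne']; ring
  have hq0 : 0 < q := by rw [hq]; exact div_pos (by linarith) (by linarith)
  refine (numRange_subset_numRange_transpose (by linarith) hpq T).antisymm ?_
  simpa using numRange_subset_numRange_transpose hq0 ((mul_comm _ _).trans hpq) Tᵀ
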